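/- In the triangular setting, assuming θ < min{α, α̃}, there exist constants K₃ ≥ 1, α₃ > 0 and ε₃ ≥ 0 with ε₃ < α₃ such that ‖(I − P^A(t))W(t,s) − R(t)Y(t,s)‖ ≤ K₃ e^{−α₃(s−t)} e^{ε₃ s} for all s ≥ t ≥ 0, where W(t,s) = ∫ₛᵗ X(t,τ)C(τ)Y(τ,s)dτ and R(t) = −∫_t^∞ X(t,τ)(I−P^A(τ))C(τ)P^B(τ)Y(τ,t)dτ − ∫₀ᵗ X(t,τ)P^A(τ)C(τ)(I−P^B(τ))Y(τ,t)dτ. -/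

import Mathlib

open MeasureTheory Filter

noncomputable section

/-- `T` is the evolution operator of the linear system `x' = A(t) x`. -/
def IsEvolution {E : Type*} [NormedAddCommGroup E] [NormedSpace ℝ E]
    (A : ℝ → E →L[ℝ] E) (T : ℝ → ℝ → E →L[ℝ] E) : Prop :=
  (∀ s : ℝ, T s s = ContinuousLinearMap.id ℝ E) ∧
  (∀ t r s : ℝ, (T t r).comp (T r s) = T t s) ∧
  (∀ (s : ℝ) (x : E) (t : ℝ), HasDerivAt (fun r => T r s x) (A t (T t s x)) t)

/-- `(K e^{ε s}, γ)`-nonuniform exponential dichotomy on `[0,∞)` with projections `P`. -/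
def NonuniformED {E : Type*} [NormedAddCommGroup E] [NormedSpace ℝ E]
    (T : ℝ → ℝ → E →L[ℝ] E) (P : ℝ → E →L[ℝ] E) (K ε γ : ℝ) : Prop :=
  1 ≤ K ∧ 0 ≤ ε ∧ ε < γ ∧
  (∀ t : ℝ, 0 ≤ t → (P t).comp (P t) = P t) ∧
  (∀ t s : ℝ, 0 ≤ t → 0 ≤ s → (T t s).comp (P s) = (P t).comp (T t s)) ∧
  (∀ s t : ℝ, 0 ≤ s → s ≤ t →
    ‖(T t s).comp (P s)‖ ≤ K * Real.exp (-γ * (t - s)) * Real.exp (ε * s)) ∧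
  (∀ t s : ℝ, 0 ≤ t → t ≤ s →
    ‖(T t s).comp (ContinuousLinearMap.id ℝ E - P s)‖ ≤ K * Real.exp (-γ * (s - t)) * Real.exp (ε * s))

/-- Nonuniform exponential contraction: dichotomy with `P = I`. -/
def NonuniformContraction {E : Type*} [NormedAddCommGroup E] [NormedSpace ℝ E]
    (T : ℝ → ℝ → E →L[ℝ] E) (K ε γ : ℝ) : Prop :=
  NonuniformED T (fun _ => ContinuousLinearMap.id ℝ E) K ε γ

/-- Half `(M e^{δ s}, ν)`-nonuniform bounded growth on `[0,∞)`. -/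
def HalfNBG {E : Type*} [NormedAddCommGroup E] [NormedSpace ℝ E]
    (T : ℝ → ℝ → E →L[ℝ] E) (M δ ν : ℝ) : Prop :=
  1 ≤ M ∧ 0 ≤ δ ∧ 0 < ν ∧
  ∀ s t : ℝ, 0 ≤ s → s ≤ t → ‖T t s‖ ≤ M * Real.exp (ν * (t - s)) * Real.exp (δ * s)

/-- Nonuniform exponential dichotomy spectrum of the system with evolution operator `T`. -/
def NonuniformSpectrum {E : Type*} [NormedAddCommGroup E] [NormedSpace ℝ E]
    (T : ℝ → ℝ → E →L[ℝ] E) : Set ℝ :=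
  {l : ℝ | ¬ ∃ P K ε γ, NonuniformED (fun t s => Real.exp (-l * (t - s)) • T t s) P K ε γ}

/-- Piecewise continuity: on each compact interval, continuity off a finite set. -/
def PiecewiseContinuous {E : Type*} [TopologicalSpace E] (ω : ℝ → E) : Prop :=
  ∀ a b : ℝ, ∃ s : Finset ℝ, ContinuousOn ω (Set.Icc a b \ ↑s)

/-- Global nonuniform asymptotic stability of the trivial solution of `x' = g(t,x)`. -/
def GloballyNonuniformlyAsymptoticallyStable {E : Type*} [NormedAddCommGroup E]
    [NormedSpace ℝ E] (g : ℝ → E → E) : Prop :=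
  (∀ t₀ : ℝ, 0 ≤ t₀ → ∀ η > (0:ℝ), ∃ δ > (0:ℝ), ∀ x : ℝ → E,
    (∀ t, t₀ ≤ t → HasDerivAt x (g t (x t)) t) → ‖x t₀‖ < δ →
      ∀ t, t₀ ≤ t → ‖x t‖ < η) ∧
  (∀ t₀ : ℝ, 0 ≤ t₀ → ∀ x : ℝ → E,
    (∀ t, t₀ ≤ t → HasDerivAt x (g t (x t)) t) → Tendsto x atTop (nhds 0))

/-- Operator norm with parametrized norm `ND s` on the domain and `NC t` on the codomain. -/
def pNorm {V W : Type*} [NormedAddCommGroup V] [NormedSpace ℝ V]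
    [NormedAddCommGroup W] [NormedSpace ℝ W]
    (ND : ℝ → V → ℝ) (NC : ℝ → W → ℝ) (s t : ℝ) (U : V →L[ℝ] W) : ℝ :=
  sSup {r : ℝ | ∃ x : V, x ≠ 0 ∧ r = NC t (U x) / ND s x}

/-- `N t` is a norm for each `t` (triangle inequality and absolute homogeneity). -/
def IsNormFamily {V : Type*} [NormedAddCommGroup V] [NormedSpace ℝ V]
    (N : ℝ → V → ℝ) : Prop :=
  (∀ t x y, N t (x + y) ≤ N t x + N t y) ∧ ∀ (t : ℝ) (c : ℝ) (x : V), N t (c • x) = |c| * N t x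

/-- The block upper triangular operator `[[A, C], [0, B]]` on `E × F`. -/
def blockUpper {E F : Type*} [NormedAddCommGroup E] [NormedSpace ℝ E]
    [NormedAddCommGroup F] [NormedSpace ℝ F]
    (A : E →L[ℝ] E) (B : F →L[ℝ] F) (C : F →L[ℝ] E) : (E × F) →L[ℝ] (E × F) :=
  ((A.comp (ContinuousLinearMap.fst ℝ E F)) + (C.comp (ContinuousLinearMap.snd ℝ E F))).prod
    (B.comp (ContinuousLinearMap.snd ℝ E F))

/-- Evolution operator of the scalar equation `x' = a(t) x`. -/
def scalarEvol (a : ℝ → ℝ) (t s : ℝ) : ℝ →L[ℝ] ℝ :=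
  Real.exp (∫ τ in s..t, a τ) • (1 : ℝ →L[ℝ] ℝ)


/-- `‖C‖_{τ,∞} = sup_{τ ≥ 0} ‖C(τ)‖_{τ,τ}`. -/
def CSupNorm {E F : Type*} [NormedAddCommGroup E] [NormedSpace ℝ E]
    [NormedAddCommGroup F] [NormedSpace ℝ F]
    (NB : ℝ → F → ℝ) (NA : ℝ → E → ℝ) (C : ℝ → F →L[ℝ] E) : ℝ :=
  sSup ((fun τ => pNorm NB NA τ τ (C τ)) '' Set.Ici (0 : ℝ))

/-- The off-diagonal block `W(t,s) = ∫ₛᵗ X(t,τ)C(τ)Y(τ,s)dτ`. -/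
def Wop {E F : Type*} [NormedAddCommGroup E] [NormedSpace ℝ E]
    [NormedAddCommGroup F] [NormedSpace ℝ F]
    (X : ℝ → ℝ → E →L[ℝ] E) (Y : ℝ → ℝ → F →L[ℝ] F) (C : ℝ → F →L[ℝ] E)
    (t s : ℝ) : F →L[ℝ] E :=
  ∫ τ in s..t, (X t τ).comp ((C τ).comp (Y τ s))

/-- The operator
`R(t) = −∫_t^∞ X(t,τ)(I−P^A(τ))C(τ)P^B(τ)Y(τ,t)dτ − ∫_0^t X(t,τ)P^A(τ)C(τ)(I−P^B(τ))Y(τ,t)dτ`. -/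
def Rop {E F : Type*} [NormedAddCommGroup E] [NormedSpace ℝ E]
    [NormedAddCommGroup F] [NormedSpace ℝ F]
    (X : ℝ → ℝ → E →L[ℝ] E) (Y : ℝ → ℝ → F →L[ℝ] F) (C : ℝ → F →L[ℝ] E)
    (PA : ℝ → E →L[ℝ] E) (PB : ℝ → F →L[ℝ] F) (t : ℝ) : F →L[ℝ] E :=
  -(∫ τ in Set.Ioi t, ((X t τ).comp (ContinuousLinearMap.id ℝ E - PA τ)).comp
      ((C τ).comp ((PB τ).comp (Y τ t)))) -
  ∫ τ in (0:ℝ)..t, ((X t τ).comp (PA τ)).comp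
      ((C τ).comp ((ContinuousLinearMap.id ℝ F - PB τ).comp (Y τ t)))


private lemma normFamily_zero {V : Type*} [NormedAddCommGroup V] [NormedSpace ℝ V]
    {N : ℝ → V → ℝ} (h : IsNormFamily N) (t : ℝ) : N t 0 = 0 := by
  have h0 := h.2 t 0 0
  simpa using h0

private lemma pNorm_nonneg'' {V W : Type*} [NormedAddCommGroup V] [NormedSpace ℝ V]
    [NormedAddCommGroup W] [NormedSpace ℝ W]
    {ND : ℝ → V → ℝ} {NC : ℝ → W → ℝ} {L₁ : ℝ} (hL₁ : 0 < L₁) {s t : ℝ}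
    (hDlow : ∀ x : V, L₁ * ‖x‖ ≤ ND s x)
    (hClow : ∀ y : W, L₁ * ‖y‖ ≤ NC t y)
    (U : V →L[ℝ] W) : 0 ≤ pNorm ND NC s t U := by
  apply Real.sSup_nonneg
  rintro r ⟨y, hy, rfl⟩
  have h1 : 0 ≤ NC t (U y) := le_trans (by positivity) (hClow (U y))
  have h2 : 0 ≤ ND s y := le_trans (by positivity) (hDlow y)
  exact div_nonneg h1 h2

private lemma pNorm_apply_le {V W : Type*} [NormedAddCommGroup V] [NormedSpace ℝ V]
    [NormedAddCommGroup W] [NormedSpace ℝ W]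
    {ND : ℝ → V → ℝ} {NC : ℝ → W → ℝ} (hD : IsNormFamily ND)
    {L₁ L₂ θ : ℝ} (hL₁ : 0 < L₁) (hL₂ : 0 < L₂) {s t : ℝ}
    (hDlow : ∀ x : V, L₁ * ‖x‖ ≤ ND s x)
    (hClow : ∀ y : W, L₁ * ‖y‖ ≤ NC t y)
    (hCup : ∀ y : W, NC t y ≤ L₂ * Real.exp (θ * t) * ‖y‖)
    (U : V →L[ℝ] W) (x : V) :
    NC t (U x) ≤ pNorm ND NC s t U * ND s x := by
  by_cases hx : x = 0
  · subst hx
    simp only [map_zero]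
    have h1 : NC t (0 : W) = 0 := le_antisymm (by simpa using hCup 0) (by simpa using hClow 0)
    rw [h1, normFamily_zero hD, mul_zero]
  · have hxn : 0 < ‖x‖ := norm_pos_iff.mpr hx
    have hDx : 0 < ND s x := lt_of_lt_of_le (by positivity) (hDlow x)
    have hbdd : BddAbove {r : ℝ | ∃ y : V, y ≠ 0 ∧ r = NC t (U y) / ND s y} := by
      refine ⟨L₂ * Real.exp (θ * t) * ‖U‖ / L₁, ?_⟩
      rintro r ⟨y, hy, rfl⟩
      have hyn : 0 < ‖y‖ := norm_pos_iff.mpr hy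
      have h1 : NC t (U y) ≤ L₂ * Real.exp (θ * t) * ‖U‖ * ‖y‖ := by
        refine le_trans (hCup (U y)) ?_
        have h2 := U.le_opNorm y
        have hpos : (0:ℝ) < L₂ * Real.exp (θ * t) := by positivity
        nlinarith
      calc NC t (U y) / ND s y
          ≤ (L₂ * Real.exp (θ * t) * ‖U‖ * ‖y‖) / (L₁ * ‖y‖) :=
            div_le_div₀ (by positivity) h1 (by positivity) (hDlow y)
        _ = L₂ * Real.exp (θ * t) * ‖U‖ / L₁ := by
            field_simp
    have hle : NC t (U x) / ND s x ≤ pNorm ND NC s t U :=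
      le_csSup hbdd ⟨x, hx, rfl⟩
    have h2 := mul_le_mul_of_nonneg_right hle hDx.le
    rwa [div_mul_cancel₀ _ hDx.ne'] at h2

private lemma chain_opNorm {V W : Type*} [NormedAddCommGroup V] [NormedSpace ℝ V]
    [NormedAddCommGroup W] [NormedSpace ℝ W]
    {NV : ℝ → V → ℝ} {NW : ℝ → W → ℝ}
    (hVfam : IsNormFamily NV) (hWfam : IsNormFamily NW)
    {L₁ L₂ θ : ℝ} (hL₁ : 0 < L₁) (hL₂ : 0 < L₂)
    {t τ s : ℝ} (ht : 0 ≤ t) (hτ : 0 ≤ τ) (hs : 0 ≤ s)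
    (hsandV : ∀ (r : ℝ) (x : V), 0 ≤ r → L₁ * ‖x‖ ≤ NV r x ∧ NV r x ≤ L₂ * Real.exp (θ * r) * ‖x‖)
    (hsandW : ∀ (r : ℝ) (y : W), 0 ≤ r → L₁ * ‖y‖ ≤ NW r y ∧ NW r y ≤ L₂ * Real.exp (θ * r) * ‖y‖)
    (U : W →L[ℝ] W) (Cc : V →L[ℝ] W) (Vv : V →L[ℝ] V)
    {a c b : ℝ} (ha : 0 ≤ a) (hc : 0 ≤ c) (hb : 0 ≤ b)
    (hU : pNorm NW NW τ t U ≤ a) (hC : pNorm NV NW τ τ Cc ≤ c) (hV : pNorm NV NV s τ Vv ≤ b) :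
    ‖U.comp (Cc.comp Vv)‖ ≤ L₂ / L₁ * Real.exp (θ * s) * (a * c * b) := by
  have hWl : ∀ (r : ℝ), 0 ≤ r → ∀ y : W, L₁ * ‖y‖ ≤ NW r y := fun r hr y => (hsandW r y hr).1
  have hVl : ∀ (r : ℝ), 0 ≤ r → ∀ x : V, L₁ * ‖x‖ ≤ NV r x := fun r hr x => (hsandV r x hr).1
  refine ContinuousLinearMap.opNorm_le_bound _ (by positivity) fun x => ?_
  have n1 : NW t (U (Cc (Vv x))) ≤ a * NW τ (Cc (Vv x)) := by
    calc NW t (U (Cc (Vv x))) ≤ pNorm NW NW τ t U * NW τ (Cc (Vv x)) :=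
        pNorm_apply_le hWfam hL₁ hL₂ (hWl τ hτ) (hWl t ht) (fun y => (hsandW t y ht).2) U _
      _ ≤ a * NW τ (Cc (Vv x)) :=
        mul_le_mul_of_nonneg_right hU (le_trans (by positivity) (hWl τ hτ _))
  have n2 : NW τ (Cc (Vv x)) ≤ c * NV τ (Vv x) := by
    calc NW τ (Cc (Vv x)) ≤ pNorm NV NW τ τ Cc * NV τ (Vv x) :=
        pNorm_apply_le hVfam hL₁ hL₂ (hVl τ hτ) (hWl τ hτ) (fun y => (hsandW τ y hτ).2) Cc _
      _ ≤ c * NV τ (Vv x) :=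
        mul_le_mul_of_nonneg_right hC (le_trans (by positivity) (hVl τ hτ _))
  have n3 : NV τ (Vv x) ≤ b * NV s x := by
    calc NV τ (Vv x) ≤ pNorm NV NV s τ Vv * NV s x :=
        pNorm_apply_le hVfam hL₁ hL₂ (hVl s hs) (hVl τ hτ) (fun y => (hsandV τ y hτ).2) Vv _
      _ ≤ b * NV s x :=
        mul_le_mul_of_nonneg_right hV (le_trans (by positivity) (hVl s hs _))
  have n4 : NV s x ≤ L₂ * Real.exp (θ * s) * ‖x‖ := (hsandV s x hs).2
  have low : L₁ * ‖U (Cc (Vv x))‖ ≤ NW t (U (Cc (Vv x))) := hWl t ht _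
  have key : L₁ * ‖(U.comp (Cc.comp Vv)) x‖ ≤ a * (c * (b * (L₂ * Real.exp (θ * s) * ‖x‖))) := by
    have e1 : (U.comp (Cc.comp Vv)) x = U (Cc (Vv x)) := rfl
    rw [e1]
    calc L₁ * ‖U (Cc (Vv x))‖ ≤ NW t (U (Cc (Vv x))) := low
      _ ≤ a * NW τ (Cc (Vv x)) := n1
      _ ≤ a * (c * NV τ (Vv x)) := mul_le_mul_of_nonneg_left n2 ha
      _ ≤ a * (c * (b * NV s x)) := mul_le_mul_of_nonneg_left (mul_le_mul_of_nonneg_left n3 hc) ha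
      _ ≤ a * (c * (b * (L₂ * Real.exp (θ * s) * ‖x‖))) := by
          refine mul_le_mul_of_nonneg_left ?_ ha
          refine mul_le_mul_of_nonneg_left ?_ hc
          exact mul_le_mul_of_nonneg_left n4 hb
  rw [show L₂ / L₁ * Real.exp (θ * s) * (a * c * b) * ‖x‖
      = (a * (c * (b * (L₂ * Real.exp (θ * s) * ‖x‖)))) / L₁ by field_simp]
  rw [le_div_iff₀ hL₁]
  linarith [key]

set_option maxHeartbeats 3200000

/-- there are constants `K₃ ≥ 1`, `α₃ > 0`, `0 ≤ ε₃ < α₃` with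
`‖(I − P^A(t))W(t,s) − R(t)Y(t,s)‖ ≤ K₃ e^{−α₃(s−t)} e^{ε₃ s}` for all `s ≥ t ≥ 0`. -/
theorem Q_W_minus_R_Y_estimate {n m : ℕ}
    (A : ℝ → EuclideanSpace ℝ (Fin n) →L[ℝ] EuclideanSpace ℝ (Fin n))
    (B : ℝ → EuclideanSpace ℝ (Fin m) →L[ℝ] EuclideanSpace ℝ (Fin m))
    (C : ℝ → EuclideanSpace ℝ (Fin m) →L[ℝ] EuclideanSpace ℝ (Fin n))
    (X : ℝ → ℝ → EuclideanSpace ℝ (Fin n) →L[ℝ] EuclideanSpace ℝ (Fin n))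
    (Y : ℝ → ℝ → EuclideanSpace ℝ (Fin m) →L[ℝ] EuclideanSpace ℝ (Fin m))
    (hX : IsEvolution A X) (hY : IsEvolution B Y)
    (PA : ℝ → EuclideanSpace ℝ (Fin n) →L[ℝ] EuclideanSpace ℝ (Fin n))
    (PB : ℝ → EuclideanSpace ℝ (Fin m) →L[ℝ] EuclideanSpace ℝ (Fin m))
    (hPA : ∀ t : ℝ, 0 ≤ t → (PA t).comp (PA t) = PA t)
    (hPB : ∀ t : ℝ, 0 ≤ t → (PB t).comp (PB t) = PB t)
    (hPAinv : ∀ t s : ℝ, 0 ≤ t → 0 ≤ s → (X t s).comp (PA s) = (PA t).comp (X t s))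
    (hPBinv : ∀ t s : ℝ, 0 ≤ t → 0 ≤ s → (Y t s).comp (PB s) = (PB t).comp (Y t s))
    (NA : ℝ → EuclideanSpace ℝ (Fin n) → ℝ) (NB : ℝ → EuclideanSpace ℝ (Fin m) → ℝ)
    (hNAfam : IsNormFamily NA) (hNBfam : IsNormFamily NB)
    (L₁ L₂ θ : ℝ) (hL₁ : 0 < L₁) (hL₂ : 1 ≤ L₂) (hθ : 0 ≤ θ)
    (hsandA : ∀ (t : ℝ) (x : EuclideanSpace ℝ (Fin n)), 0 ≤ t →
      L₁ * ‖x‖ ≤ NA t x ∧ NA t x ≤ L₂ * Real.exp (θ * t) * ‖x‖)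
    (hsandB : ∀ (t : ℝ) (y : EuclideanSpace ℝ (Fin m)), 0 ≤ t →
      L₁ * ‖y‖ ≤ NB t y ∧ NB t y ≤ L₂ * Real.exp (θ * t) * ‖y‖)
    (κ κ' α α' : ℝ) (hα : 0 < α) (hα' : 0 < α')
    (hPX1 : ∀ s t : ℝ, 0 ≤ s → s ≤ t →
      pNorm NA NA s t ((X t s).comp (PA s)) ≤ κ * Real.exp (-α * (t - s)))
    (hPX2 : ∀ t s : ℝ, 0 ≤ t → t ≤ s →
      pNorm NA NA s t ((X t s).comp (ContinuousLinearMap.id ℝ _ - PA s)) ≤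
        κ * Real.exp (-α * (s - t)))
    (hPY1 : ∀ s t : ℝ, 0 ≤ s → s ≤ t →
      pNorm NB NB s t ((Y t s).comp (PB s)) ≤ κ' * Real.exp (-α' * (t - s)))
    (hPY2 : ∀ t s : ℝ, 0 ≤ t → t ≤ s →
      pNorm NB NB s t ((Y t s).comp (ContinuousLinearMap.id ℝ _ - PB s)) ≤
        κ' * Real.exp (-α' * (s - t)))
    (hCbdd : BddAbove ((fun τ => pNorm NB NA τ τ (C τ)) '' Set.Ici (0 : ℝ)))
    (hθmin : θ < min α α')
    -- convergence of the integrals involved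
    (hint1 : ∀ t : ℝ, 0 ≤ t → MeasureTheory.IntegrableOn
      (fun τ => ((X t τ).comp (ContinuousLinearMap.id ℝ _ - PA τ)).comp
        ((C τ).comp ((PB τ).comp (Y τ t))) :
          ℝ → EuclideanSpace ℝ (Fin m) →L[ℝ] EuclideanSpace ℝ (Fin n)) (Set.Ioi t) MeasureTheory.volume)
    (hint2 : ∀ t : ℝ, 0 ≤ t → IntervalIntegrable
      (fun τ => ((X t τ).comp (PA τ)).comp
        ((C τ).comp ((ContinuousLinearMap.id ℝ _ - PB τ).comp (Y τ t))))
      MeasureTheory.volume 0 t)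
    (hint3 : ∀ t s : ℝ, IntervalIntegrable
      (fun τ => (X t τ).comp ((C τ).comp (Y τ s))) MeasureTheory.volume s t) :
    ∃ K₃ α₃ ε₃ : ℝ, 1 ≤ K₃ ∧ 0 < α₃ ∧ 0 ≤ ε₃ ∧ ε₃ < α₃ ∧
      ∀ t s : ℝ, 0 ≤ t → t ≤ s →
        ‖(ContinuousLinearMap.id ℝ _ - PA t).comp (Wop X Y C t s) -
            (Rop X Y C PA PB t).comp (Y t s)‖ ≤
          K₃ * Real.exp (-α₃ * (s - t)) * Real.exp (ε₃ * s) := by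

  classical
  obtain ⟨-, hYco, -⟩ := hY
  have hYapp : ∀ (τ u v : ℝ) (y : EuclideanSpace ℝ (Fin m)), Y τ u (Y u v y) = Y τ v y := by
    intro τ u v y
    exact ContinuousLinearMap.ext_iff.mp (hYco τ u v) y
  have hL₂0 : (0:ℝ) < L₂ := lt_of_lt_of_le one_pos hL₂
  set β : ℝ := min α α' with hβdef
  have hθβ : θ < β := hθmin
  have hβα : β ≤ α := min_le_left _ _
  have hβα' : β ≤ α' := min_le_right _ _
  have hβpos : 0 < β := lt_of_le_of_lt hθ hθβ
  set δ : ℝ := (β - θ) / 4 with hδdef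
  have hδpos : 0 < δ := by rw [hδdef]; linarith
  have hβθ : β = θ + 4 * δ := by rw [hδdef]; ring
  have hpnn : ∀ τ : ℝ, 0 ≤ τ → 0 ≤ pNorm NB NA τ τ (C τ) := fun τ hτ =>
    pNorm_nonneg'' hL₁ (fun x => (hsandB τ x hτ).1) (fun y => (hsandA τ y hτ).1) (C τ)
  set Mc : ℝ := sSup ((fun τ => pNorm NB NA τ τ (C τ)) '' Set.Ici (0:ℝ)) with hMcdef
  have hMcle : ∀ τ : ℝ, 0 ≤ τ → pNorm NB NA τ τ (C τ) ≤ Mc := fun τ hτ =>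
    le_csSup hCbdd ⟨τ, hτ, rfl⟩
  have hMc0 : 0 ≤ Mc := le_trans (hpnn 0 le_rfl) (hMcle 0 le_rfl)
  have hκ0 : 0 ≤ κ := by
    have h := hPX1 0 0 le_rfl le_rfl
    have h2 := pNorm_nonneg'' hL₁ (fun x => (hsandA 0 x le_rfl).1)
      (fun y => (hsandA 0 y le_rfl).1) ((X 0 0).comp (PA 0))
    simp at h
    linarith
  have hκ'0 : 0 ≤ κ' := by
    have h := hPY1 0 0 le_rfl le_rfl
    have h2 := pNorm_nonneg'' hL₁ (fun x => (hsandB 0 x le_rfl).1)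
      (fun y => (hsandB 0 y le_rfl).1) ((Y 0 0).comp (PB 0))
    simp at h
    linarith
  set Kc : ℝ := L₂ / L₁ * (κ * Mc * κ') with hKcdef
  have hKc0 : 0 ≤ Kc := by
    rw [hKcdef]
    exact mul_nonneg (by positivity) (mul_nonneg (mul_nonneg hκ0 hMc0) hκ'0)
  have hαα' : (0:ℝ) < α + α' := by linarith
  refine ⟨max 1 (Kc / (α + α') + Kc / (2 * δ) + Kc / δ), θ + 2 * δ, θ + δ,
    le_max_left _ _, by linarith, by linarith, by linarith, ?_⟩
  intro t s ht hts
  have hs : 0 ≤ s := le_trans ht hts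
  set g₁ : ℝ → EuclideanSpace ℝ (Fin m) →L[ℝ] EuclideanSpace ℝ (Fin n) :=
    fun τ => ((X t τ).comp (ContinuousLinearMap.id ℝ _ - PA τ)).comp
      ((C τ).comp ((PB τ).comp (Y τ s))) with hg₁def
  set g₃ : ℝ → EuclideanSpace ℝ (Fin m) →L[ℝ] EuclideanSpace ℝ (Fin n) :=
    fun τ => ((X t τ).comp (PA τ)).comp
      ((C τ).comp ((ContinuousLinearMap.id ℝ _ - PB τ).comp (Y τ s))) with hg₃def
  set h₃ : ℝ → EuclideanSpace ℝ (Fin m) →L[ℝ] EuclideanSpace ℝ (Fin n) :=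
    fun τ => (X t τ).comp ((C τ).comp (Y τ s)) with hh₃def
  set g₂ : ℝ → EuclideanSpace ℝ (Fin m) →L[ℝ] EuclideanSpace ℝ (Fin n) :=
    fun τ => (ContinuousLinearMap.id ℝ _ - PA t).comp (h₃ τ) - g₁ τ with hg₂def
  let Lr : (EuclideanSpace ℝ (Fin m) →L[ℝ] EuclideanSpace ℝ (Fin n)) →L[ℝ]
      (EuclideanSpace ℝ (Fin m) →L[ℝ] EuclideanSpace ℝ (Fin n)) :=
    (ContinuousLinearMap.compL ℝ (EuclideanSpace ℝ (Fin m)) (EuclideanSpace ℝ (Fin m))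
      (EuclideanSpace ℝ (Fin n))).flip (Y t s)
  have hLr : ∀ U : EuclideanSpace ℝ (Fin m) →L[ℝ] EuclideanSpace ℝ (Fin n),
      Lr U = U.comp (Y t s) := fun U => rfl
  let Ll : (EuclideanSpace ℝ (Fin m) →L[ℝ] EuclideanSpace ℝ (Fin n)) →L[ℝ]
      (EuclideanSpace ℝ (Fin m) →L[ℝ] EuclideanSpace ℝ (Fin n)) :=
    ContinuousLinearMap.compL ℝ (EuclideanSpace ℝ (Fin m)) (EuclideanSpace ℝ (Fin n))
      (EuclideanSpace ℝ (Fin n)) (ContinuousLinearMap.id ℝ _ - PA t)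
  have hLl : ∀ U : EuclideanSpace ℝ (Fin m) →L[ℝ] EuclideanSpace ℝ (Fin n),
      Ll U = (ContinuousLinearMap.id ℝ _ - PA t).comp U := fun U => rfl
  have heq1 : (fun τ => Lr (((X t τ).comp (ContinuousLinearMap.id ℝ _ - PA τ)).comp
      ((C τ).comp ((PB τ).comp (Y τ t))))) = g₁ := by
    funext τ
    rw [hLr]
    simp only [hg₁def]
    ext y
    simp only [ContinuousLinearMap.comp_apply, hYapp]
  have heq3 : (fun τ => Lr (((X t τ).comp (PA τ)).comp
      ((C τ).comp ((ContinuousLinearMap.id ℝ _ - PB τ).comp (Y τ t))))) = g₃ := by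
    funext τ
    rw [hLr]
    simp only [hg₃def]
    ext y
    simp only [ContinuousLinearMap.comp_apply, ContinuousLinearMap.sub_apply,
      ContinuousLinearMap.id_apply, map_sub, hYapp]
  have hg₁Ioi : MeasureTheory.IntegrableOn g₁ (Set.Ioi t) MeasureTheory.volume := by
    have h2 := Lr.integrable_comp (hint1 t ht)
    rwa [heq1] at h2
  have hg₁Iocii : IntervalIntegrable g₁ MeasureTheory.volume t s :=
    (intervalIntegrable_iff_integrableOn_Ioc_of_le hts).2
      (hg₁Ioi.mono_set Set.Ioc_subset_Ioi_self)
  have hLlh₃ii : IntervalIntegrable (fun τ => Ll (h₃ τ)) MeasureTheory.volume t s := by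
    have h := (hint3 t s).symm
    exact ⟨Ll.integrable_comp h.1, Ll.integrable_comp h.2⟩
  have hg₂ii : IntervalIntegrable g₂ MeasureTheory.volume t s := by
    have h := hLlh₃ii.sub hg₁Iocii
    exact h
  have e1 : (∫ τ in Set.Ioi t, ((X t τ).comp
        (ContinuousLinearMap.id ℝ (EuclideanSpace ℝ (Fin n)) - PA τ)).comp
      ((C τ).comp ((PB τ).comp (Y τ t)))).comp (Y t s) = ∫ τ in Set.Ioi t, g₁ τ := by
    rw [← hLr, ← ContinuousLinearMap.integral_comp_comm Lr (hint1 t ht)]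
    refine MeasureTheory.integral_congr_ae (Filter.Eventually.of_forall fun τ => ?_)
    exact congrFun heq1 τ
  have e2 : (∫ τ in (0:ℝ)..t, ((X t τ).comp (PA τ)).comp
      ((C τ).comp ((ContinuousLinearMap.id ℝ (EuclideanSpace ℝ (Fin m)) - PB τ).comp
        (Y τ t)))).comp (Y t s) = ∫ τ in (0:ℝ)..t, g₃ τ := by
    rw [← hLr, ← Lr.intervalIntegral_comp_comm (hint2 t ht)]
    apply intervalIntegral.integral_congr
    intro τ _
    exact congrFun heq3 τ
  have hR : (Rop X Y C PA PB t).comp (Y t s) =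
      -(∫ τ in Set.Ioi t, g₁ τ) - ∫ τ in (0:ℝ)..t, g₃ τ := by
    unfold Rop
    rw [ContinuousLinearMap.sub_comp, ContinuousLinearMap.neg_comp, e1, e2]
  have e0 : (∫ τ in t..s, Ll ((X t τ).comp ((C τ).comp (Y τ s)))) =
      (∫ τ in t..s, g₁ τ) + ∫ τ in t..s, g₂ τ := by
    rw [← intervalIntegral.integral_add hg₁Iocii hg₂ii]
    apply intervalIntegral.integral_congr
    intro τ _
    show Ll (h₃ τ) = g₁ τ + g₂ τ
    rw [hLl]
    simp only [hg₂def]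
    abel
  have hWid : (ContinuousLinearMap.id ℝ _ - PA t).comp (Wop X Y C t s) =
      -(∫ τ in t..s, g₁ τ) - ∫ τ in t..s, g₂ τ := by
    unfold Wop
    rw [← hLl, ← Ll.intervalIntegral_comp_comm (hint3 t s),
      intervalIntegral.integral_symm t s]
    show -(∫ τ in t..s, Ll ((X t τ).comp ((C τ).comp (Y τ s)))) =
      -(∫ τ in t..s, g₁ τ) - ∫ τ in t..s, g₂ τ
    rw [e0]
    abel
  have hsplit : (∫ τ in Set.Ioi t, g₁ τ) =
      (∫ τ in Set.Ioc t s, g₁ τ) + ∫ τ in Set.Ioi s, g₁ τ := by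
    rw [← MeasureTheory.setIntegral_union (Set.Ioc_disjoint_Ioi le_rfl) measurableSet_Ioi
      (hg₁Ioi.mono_set Set.Ioc_subset_Ioi_self) (hg₁Ioi.mono_set (Set.Ioi_subset_Ioi hts)),
      Set.Ioc_union_Ioi_eq_Ioi hts]
  have hkey : (ContinuousLinearMap.id ℝ _ - PA t).comp (Wop X Y C t s) -
      (Rop X Y C PA PB t).comp (Y t s) =
      (∫ τ in Set.Ioi s, g₁ τ) - (∫ τ in t..s, g₂ τ) + ∫ τ in (0:ℝ)..t, g₃ τ := by
    rw [hWid, hR, hsplit, intervalIntegral.integral_of_le hts]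
    abel
  -- projection commutation on the B side
  have hQBrw : ∀ τ : ℝ, 0 ≤ τ → (ContinuousLinearMap.id ℝ _ - PB τ).comp (Y τ s)
      = (Y τ s).comp (ContinuousLinearMap.id ℝ _ - PB s) := by
    intro τ hτ
    ext y
    have h := ContinuousLinearMap.ext_iff.mp (hPBinv τ s hτ hs) y
    simp only [ContinuousLinearMap.comp_apply, ContinuousLinearMap.sub_apply,
      ContinuousLinearMap.id_apply, map_sub] at h ⊢
    rw [h]
  have hPBrw : ∀ τ : ℝ, 0 ≤ τ → (PB τ).comp (Y τ s) = (Y τ s).comp (PB s) := fun τ hτ =>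
    (hPBinv τ s hτ hs).symm
  -- pointwise bounds
  have hb₁ : ∀ τ ∈ Set.Ioi s, ‖g₁ τ‖ ≤
      (Kc * Real.exp (θ * s) * Real.exp (α * t + α' * s)) * Real.exp (-(α + α') * τ) := by
    intro τ hτmem
    have hτs : s ≤ τ := le_of_lt hτmem
    have hτ0 : 0 ≤ τ := le_trans hs hτs
    have htτ : t ≤ τ := le_trans hts hτs
    have hU := hPX2 t τ ht htτ
    have hV : pNorm NB NB s τ ((PB τ).comp (Y τ s)) ≤ κ' * Real.exp (-α' * (τ - s)) := by
      rw [hPBrw τ hτ0]; exact hPY1 s τ hs hτs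
    have hch := chain_opNorm (a := κ * Real.exp (-α * (τ - t))) (c := Mc)
      (b := κ' * Real.exp (-α' * (τ - s)))
      hNBfam hNAfam hL₁ hL₂0 ht hτ0 hs hsandB hsandA
      ((X t τ).comp (ContinuousLinearMap.id ℝ _ - PA τ)) (C τ) ((PB τ).comp (Y τ s))
      (mul_nonneg hκ0 (Real.exp_pos _).le) hMc0 (mul_nonneg hκ'0 (Real.exp_pos _).le)
      hU (hMcle τ hτ0) hV
    have hg₁τ : g₁ τ = ((X t τ).comp (ContinuousLinearMap.id ℝ _ - PA τ)).comp
        ((C τ).comp ((PB τ).comp (Y τ s))) := by simp only [hg₁def]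
    rw [hg₁τ]
    refine le_trans hch (le_of_eq ?_)
    have hE : Real.exp (-α * (τ - t)) * Real.exp (-α' * (τ - s)) =
        Real.exp (α * t + α' * s) * Real.exp (-(α + α') * τ) := by
      rw [← Real.exp_add, ← Real.exp_add]; congr 1; ring
    rw [hKcdef]
    linear_combination (L₂ / L₁ * Real.exp (θ * s) * κ * Mc * κ') * hE
  have hb₂ : ∀ τ ∈ Set.uIoc t s, ‖g₂ τ‖ ≤ Kc * Real.exp (θ * s) * Real.exp (-β * (s - t)) := by
    intro τ hτmem
    rw [Set.uIoc_of_le hts] at hτmem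
    obtain ⟨htτ, hτs⟩ := hτmem
    have hτ0 : 0 ≤ τ := le_trans ht htτ.le
    have hg₂τ : g₂ τ = ((X t τ).comp (ContinuousLinearMap.id ℝ _ - PA τ)).comp
        ((C τ).comp ((ContinuousLinearMap.id ℝ _ - PB τ).comp (Y τ s))) := by
      simp only [hg₂def, hg₁def, hh₃def]
      ext y
      have hcomm : ∀ v, PA t (X t τ v) = X t τ (PA τ v) := fun v =>
        (ContinuousLinearMap.ext_iff.mp (hPAinv t τ ht hτ0) v).symm
      simp only [ContinuousLinearMap.sub_apply, ContinuousLinearMap.comp_apply,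
        ContinuousLinearMap.id_apply, map_sub, hcomm]
    rw [hg₂τ]
    have hU := hPX2 t τ ht htτ.le
    have hV : pNorm NB NB s τ ((ContinuousLinearMap.id ℝ _ - PB τ).comp (Y τ s)) ≤
        κ' * Real.exp (-α' * (s - τ)) := by
      rw [hQBrw τ hτ0]; exact hPY2 τ s hτ0 hτs
    have hch := chain_opNorm (a := κ * Real.exp (-α * (τ - t))) (c := Mc)
      (b := κ' * Real.exp (-α' * (s - τ)))
      hNBfam hNAfam hL₁ hL₂0 ht hτ0 hs hsandB hsandA
      ((X t τ).comp (ContinuousLinearMap.id ℝ _ - PA τ)) (C τ)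
      ((ContinuousLinearMap.id ℝ _ - PB τ).comp (Y τ s))
      (mul_nonneg hκ0 (Real.exp_pos _).le) hMc0 (mul_nonneg hκ'0 (Real.exp_pos _).le)
      hU (hMcle τ hτ0) hV
    refine le_trans hch ?_
    have hee : Real.exp (-α * (τ - t)) * Real.exp (-α' * (s - τ)) ≤ Real.exp (-β * (s - t)) := by
      rw [← Real.exp_add]
      refine Real.exp_le_exp.2 ?_
      linarith [mul_nonneg (sub_nonneg.2 hβα) (sub_nonneg.2 htτ.le),
        mul_nonneg (sub_nonneg.2 hβα') (sub_nonneg.2 hτs)]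
    have hcoef : (0:ℝ) ≤ L₂ / L₁ * Real.exp (θ * s) * (κ * Mc * κ') :=
      mul_nonneg (by positivity) (mul_nonneg (mul_nonneg hκ0 hMc0) hκ'0)
    calc L₂ / L₁ * Real.exp (θ * s) *
          (κ * Real.exp (-α * (τ - t)) * Mc * (κ' * Real.exp (-α' * (s - τ))))
        = (L₂ / L₁ * Real.exp (θ * s) * (κ * Mc * κ')) *
            (Real.exp (-α * (τ - t)) * Real.exp (-α' * (s - τ))) := by ring
      _ ≤ (L₂ / L₁ * Real.exp (θ * s) * (κ * Mc * κ')) * Real.exp (-β * (s - t)) :=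
          mul_le_mul_of_nonneg_left hee hcoef
      _ = Kc * Real.exp (θ * s) * Real.exp (-β * (s - t)) := by rw [hKcdef]; ring
  have hb₃ : ∀ τ ∈ Set.uIoc 0 t, ‖g₃ τ‖ ≤ Kc * Real.exp (θ * s) * Real.exp (-α' * (s - t)) := by
    intro τ hτmem
    rw [Set.uIoc_of_le ht] at hτmem
    obtain ⟨h0τ, hτt⟩ := hτmem
    have hτ0 : 0 ≤ τ := h0τ.le
    have hτs : τ ≤ s := le_trans hτt hts
    have hU := hPX1 τ t hτ0 hτt
    have hV : pNorm NB NB s τ ((ContinuousLinearMap.id ℝ _ - PB τ).comp (Y τ s)) ≤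
        κ' * Real.exp (-α' * (s - τ)) := by
      rw [hQBrw τ hτ0]; exact hPY2 τ s hτ0 hτs
    have hch := chain_opNorm (a := κ * Real.exp (-α * (t - τ))) (c := Mc)
      (b := κ' * Real.exp (-α' * (s - τ)))
      hNBfam hNAfam hL₁ hL₂0 ht hτ0 hs hsandB hsandA
      ((X t τ).comp (PA τ)) (C τ) ((ContinuousLinearMap.id ℝ _ - PB τ).comp (Y τ s))
      (mul_nonneg hκ0 (Real.exp_pos _).le) hMc0 (mul_nonneg hκ'0 (Real.exp_pos _).le)
      hU (hMcle τ hτ0) hV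
    have hg₃τ : g₃ τ = ((X t τ).comp (PA τ)).comp
        ((C τ).comp ((ContinuousLinearMap.id ℝ _ - PB τ).comp (Y τ s))) := by
      simp only [hg₃def]
    rw [hg₃τ]
    refine le_trans hch ?_
    have hee : Real.exp (-α * (t - τ)) * Real.exp (-α' * (s - τ)) ≤
        Real.exp (-α' * (s - t)) := by
      rw [← Real.exp_add]
      refine Real.exp_le_exp.2 ?_
      linarith [mul_nonneg hα.le (sub_nonneg.2 hτt), mul_nonneg hα'.le (sub_nonneg.2 hτt)]
    have hcoef : (0:ℝ) ≤ L₂ / L₁ * Real.exp (θ * s) * (κ * Mc * κ') :=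
      mul_nonneg (by positivity) (mul_nonneg (mul_nonneg hκ0 hMc0) hκ'0)
    calc L₂ / L₁ * Real.exp (θ * s) *
          (κ * Real.exp (-α * (t - τ)) * Mc * (κ' * Real.exp (-α' * (s - τ))))
        = (L₂ / L₁ * Real.exp (θ * s) * (κ * Mc * κ')) *
            (Real.exp (-α * (t - τ)) * Real.exp (-α' * (s - τ))) := by ring
      _ ≤ (L₂ / L₁ * Real.exp (θ * s) * (κ * Mc * κ')) * Real.exp (-α' * (s - t)) :=
          mul_le_mul_of_nonneg_left hee hcoef
      _ = Kc * Real.exp (θ * s) * Real.exp (-α' * (s - t)) := by rw [hKcdef]; ring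
  -- the three integral estimates
  have hbint : MeasureTheory.IntegrableOn
      (fun τ => (Kc * Real.exp (θ * s) * Real.exp (α * t + α' * s)) * Real.exp (-(α + α') * τ))
      (Set.Ioi s) MeasureTheory.volume :=
    (exp_neg_integrableOn_Ioi s hαα').const_mul _
  have hval : ∫ τ in Set.Ioi s, Real.exp (-(α + α') * τ) =
      Real.exp (-(α + α') * s) / (α + α') := by
    have h1 := MeasureTheory.integral_comp_mul_right_Ioi (fun u => Real.exp (-u)) s hαα'
    simp only [smul_eq_mul] at h1
    rw [integral_exp_neg_Ioi] at h1
    have h2 : (fun τ : ℝ => Real.exp (-(α + α') * τ)) =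
        fun x : ℝ => Real.exp (-(x * (α + α'))) := by
      funext x; congr 1; ring
    rw [h2, h1]
    rw [div_eq_inv_mul]
    congr 2
    ring
  have T1 : ‖∫ τ in Set.Ioi s, g₁ τ‖ ≤
      Kc / (α + α') * (Real.exp (-(θ + 2 * δ) * (s - t)) * Real.exp ((θ + δ) * s)) := by
    have h := MeasureTheory.norm_integral_le_of_norm_le hbint
      ((MeasureTheory.ae_restrict_iff' measurableSet_Ioi).2 (MeasureTheory.ae_of_all _ hb₁))
    rw [MeasureTheory.integral_const_mul, hval] at h
    refine le_trans h ?_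
    have hexp : Real.exp (θ * s) * Real.exp (α * t + α' * s) * Real.exp (-(α + α') * s) ≤
        Real.exp (-(θ + 2 * δ) * (s - t)) * Real.exp ((θ + δ) * s) := by
      rw [← Real.exp_add, ← Real.exp_add, ← Real.exp_add]
      refine Real.exp_le_exp.2 ?_
      linarith [mul_nonneg (show (0:ℝ) ≤ α - θ - 2 * δ by linarith) (sub_nonneg.2 hts),
        mul_nonneg hδpos.le hs]
    have hd : (0:ℝ) ≤ Kc / (α + α') := div_nonneg hKc0 hαα'.le
    calc Kc * Real.exp (θ * s) * Real.exp (α * t + α' * s) *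
          (Real.exp (-(α + α') * s) / (α + α'))
        = Kc / (α + α') * (Real.exp (θ * s) * Real.exp (α * t + α' * s) *
            Real.exp (-(α + α') * s)) := by ring
      _ ≤ Kc / (α + α') * (Real.exp (-(θ + 2 * δ) * (s - t)) * Real.exp ((θ + δ) * s)) :=
          mul_le_mul_of_nonneg_left hexp hd
  have T2 : ‖∫ τ in t..s, g₂ τ‖ ≤
      Kc / (2 * δ) * (Real.exp (-(θ + 2 * δ) * (s - t)) * Real.exp ((θ + δ) * s)) := by
    have h := intervalIntegral.norm_integral_le_of_norm_le_const hb₂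
    rw [abs_of_nonneg (sub_nonneg.2 hts)] at h
    refine le_trans h ?_
    have h2δ : (0:ℝ) < 2 * δ := by linarith
    have h1 : s - t ≤ Real.exp (2 * δ * (s - t)) / (2 * δ) := by
      rw [le_div_iff₀ h2δ]
      linarith [Real.add_one_le_exp (2 * δ * (s - t))]
    have h2 : Real.exp (θ * s) ≤ Real.exp ((θ + δ) * s) :=
      Real.exp_le_exp.2 (by linarith [mul_nonneg hδpos.le hs])
    have h3 : Real.exp (-β * (s - t)) * Real.exp (2 * δ * (s - t)) =
        Real.exp (-(θ + 2 * δ) * (s - t)) := by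
      rw [← Real.exp_add]; congr 1; rw [hβθ]; ring
    have ha : (0:ℝ) ≤ Kc * Real.exp (-β * (s - t)) := mul_nonneg hKc0 (Real.exp_pos _).le
    have hmid : Real.exp (θ * s) * (s - t) ≤
        Real.exp ((θ + δ) * s) * (Real.exp (2 * δ * (s - t)) / (2 * δ)) :=
      mul_le_mul h2 h1 (sub_nonneg.2 hts) (Real.exp_pos _).le
    calc Kc * Real.exp (θ * s) * Real.exp (-β * (s - t)) * (s - t)
        = (Kc * Real.exp (-β * (s - t))) * (Real.exp (θ * s) * (s - t)) := by ring
      _ ≤ (Kc * Real.exp (-β * (s - t))) *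
            (Real.exp ((θ + δ) * s) * (Real.exp (2 * δ * (s - t)) / (2 * δ))) :=
          mul_le_mul_of_nonneg_left hmid ha
      _ = Kc / (2 * δ) * ((Real.exp (-β * (s - t)) * Real.exp (2 * δ * (s - t))) *
            Real.exp ((θ + δ) * s)) := by
          field_simp
      _ = Kc / (2 * δ) * (Real.exp (-(θ + 2 * δ) * (s - t)) * Real.exp ((θ + δ) * s)) := by
          rw [h3]
  have T3 : ‖∫ τ in (0:ℝ)..t, g₃ τ‖ ≤
      Kc / δ * (Real.exp (-(θ + 2 * δ) * (s - t)) * Real.exp ((θ + δ) * s)) := by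
    have h := intervalIntegral.norm_integral_le_of_norm_le_const hb₃
    rw [sub_zero, abs_of_nonneg ht] at h
    refine le_trans h ?_
    have h1 : t ≤ Real.exp (δ * s) / δ := by
      rw [le_div_iff₀ hδpos]
      linarith [Real.add_one_le_exp (δ * s), mul_le_mul_of_nonneg_left hts hδpos.le]
    have h4 : Real.exp (-α' * (s - t)) ≤ Real.exp (-(θ + 2 * δ) * (s - t)) :=
      Real.exp_le_exp.2 (by
        linarith [mul_nonneg (show (0:ℝ) ≤ α' - θ - 2 * δ by linarith) (sub_nonneg.2 hts)])
    have hE : Real.exp (θ * s) * Real.exp (δ * s) = Real.exp ((θ + δ) * s) := by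
      rw [← Real.exp_add]; congr 1; ring
    have ha : (0:ℝ) ≤ Kc * Real.exp (θ * s) := mul_nonneg hKc0 (Real.exp_pos _).le
    calc Kc * Real.exp (θ * s) * Real.exp (-α' * (s - t)) * t
        = (Kc * Real.exp (θ * s)) * (Real.exp (-α' * (s - t)) * t) := by ring
      _ ≤ (Kc * Real.exp (θ * s)) *
            (Real.exp (-(θ + 2 * δ) * (s - t)) * (Real.exp (δ * s) / δ)) := by
          refine mul_le_mul_of_nonneg_left ?_ ha
          exact mul_le_mul h4 h1 ht (Real.exp_pos _).le
      _ = Kc / δ * ((Real.exp (θ * s) * Real.exp (δ * s)) *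
            Real.exp (-(θ + 2 * δ) * (s - t))) := by
          field_simp
      _ = Kc / δ * (Real.exp (-(θ + 2 * δ) * (s - t)) * Real.exp ((θ + δ) * s)) := by
          rw [hE]; ring
  rw [hkey]
  have hEpos : (0:ℝ) ≤ Real.exp (-(θ + 2 * δ) * (s - t)) * Real.exp ((θ + δ) * s) := by
    positivity
  have hfin : ‖(∫ τ in Set.Ioi s, g₁ τ) - (∫ τ in t..s, g₂ τ) + ∫ τ in (0:ℝ)..t, g₃ τ‖ ≤
      (Kc / (α + α') + Kc / (2 * δ) + Kc / δ) *
        (Real.exp (-(θ + 2 * δ) * (s - t)) * Real.exp ((θ + δ) * s)) := by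
    have n1 := norm_add_le ((∫ τ in Set.Ioi s, g₁ τ) - ∫ τ in t..s, g₂ τ)
      (∫ τ in (0:ℝ)..t, g₃ τ)
    have n2 := norm_sub_le (∫ τ in Set.Ioi s, g₁ τ) (∫ τ in t..s, g₂ τ)
    have hsum : Kc / (α + α') * (Real.exp (-(θ + 2 * δ) * (s - t)) * Real.exp ((θ + δ) * s)) +
        Kc / (2 * δ) * (Real.exp (-(θ + 2 * δ) * (s - t)) * Real.exp ((θ + δ) * s)) +
        Kc / δ * (Real.exp (-(θ + 2 * δ) * (s - t)) * Real.exp ((θ + δ) * s)) =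
        (Kc / (α + α') + Kc / (2 * δ) + Kc / δ) *
          (Real.exp (-(θ + 2 * δ) * (s - t)) * Real.exp ((θ + δ) * s)) := by ring
    linarith [T1, T2, T3]
  refine le_trans hfin ?_
  have hle := le_max_right (1:ℝ) (Kc / (α + α') + Kc / (2 * δ) + Kc / δ)
  calc (Kc / (α + α') + Kc / (2 * δ) + Kc / δ) *
        (Real.exp (-(θ + 2 * δ) * (s - t)) * Real.exp ((θ + δ) * s))
      ≤ max 1 (Kc / (α + α') + Kc / (2 * δ) + Kc / δ) *
          (Real.exp (-(θ + 2 * δ) * (s - t)) * Real.exp ((θ + δ) * s)) :=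
        mul_le_mul_of_nonneg_right hle hEpos
    _ = max 1 (Kc / (α + α') + Kc / (2 * δ) + Kc / δ) *
          Real.exp (-(θ + 2 * δ) * (s - t)) * Real.exp ((θ + δ) * s) := by ring


end
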